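/- Let $(Z_n)_{n\ge 0}$ be an integer-valued process with stationary increments, $Z_0=0$, and suppose $(a_n)$ is regularly varying with exponent $\gamma\in(0,1)$ with $0 < \liminf_n \mathbb{E}[\mathcal{R}_n]/a_n \le \limsup_n \mathbb{E}[\mathcal{R}_n]/a_n < \infty$, where $\mathcal{R}_n = \#\{Z_0,\dots,Z_n\}$. Then $0 < \liminf_n \frac{n}{a_n}\mathbb{P}(T_0>n) \le \limsup_n \frac{n}{a_n}\mathbb{P}(T_0>n) < \infty$, where $T_0=\inf\{n\ge1: Z_n=0\}$. -/

import Mathlib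

open MeasureTheory Filter Finset

noncomputable section

def HasStationaryIncrements {Ω : Type*} [MeasurableSpace Ω] (μ : Measure Ω)
    (Z : ℕ → Ω → ℝ) : Prop :=
  ∀ k : ℕ, Measure.map (fun ω => fun n => Z (n + k) ω - Z k ω) μ
    = Measure.map (fun ω => fun n => Z n ω) μ

def RegularlyVarying (a : ℕ → ℝ) (γ : ℝ) : Prop :=
  ∀ lam : ℝ, 0 < lam →
    Tendsto (fun n : ℕ => a ⌊lam * n⌋₊ / a n) atTop (nhds (lam ^ γ))

/-!
Splitting the range by the last visit to each value gives
`𝔼[R_n] = ∑_{k ≤ n} P(Z_j ≠ Z_k for k < j ≤ n)`, and by stationarity of the increments the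
`k`-th term is `P(T_0 > n - k)`. Hence `𝔼[R_n] = ∑_{k ≤ n} P(T_0 > k)` is a partial sum of a
nonincreasing sequence. The upper bound follows from `n P(T_0 > n) ≤ 𝔼[R_n]`. For the lower
bound, `𝔼[R_{Mn}] - 𝔼[R_n] ≤ (M - 1) n P(T_0 > n)`, and for a large fixed `M` regular variation
makes `a_{Mn} / a_n ≈ M^γ` so large that `𝔼[R_{Mn}] - 𝔼[R_n]` is at least `a_n`.
-/

theorem Finset.card_image_eq_card_filter_forall_lt_ne {ι α : Type*} [LinearOrder ι]
    [DecidableEq α] (s : Finset ι) (f : ι → α) :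
    #(s.image f) = #{k ∈ s | ∀ j ∈ s, k < j → f j ≠ f k} := by
  have himage : {k ∈ s | ∀ j ∈ s, k < j → f j ≠ f k}.image f = s.image f := by
    refine (image_subset_image (filter_subset _ _)).antisymm fun b hb => ?_
    obtain ⟨k₀, hk₀, rfl⟩ := mem_image.mp hb
    -- the last visit of the value `f k₀`
    set T := {k ∈ s | f k = f k₀}
    have hT : T.Nonempty := ⟨k₀, mem_filter.mpr ⟨hk₀, rfl⟩⟩
    obtain ⟨hmax, hfmax⟩ := mem_filter.mp (T.max'_mem hT)
    refine mem_image.mpr ⟨T.max' hT, mem_filter.mpr ⟨hmax, fun j hj hlt hfj => ?_⟩, hfmax⟩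
    exact (T.le_max' j (mem_filter.mpr ⟨hj, hfj.trans hfmax⟩)).not_gt hlt
  rw [← himage, card_image_of_injOn]
  intro x hx y hy hxy
  rcases lt_trichotomy x y with h | h | h
  · exact absurd hxy.symm ((mem_filter.mp hx).2 y (mem_filter.mp hy).1 h)
  · exact h
  · exact absurd hxy ((mem_filter.mp hy).2 x (mem_filter.mp hx).1 h)

section StationaryIncrements

variable {Ω : Type*} [MeasurableSpace Ω] {μ : Measure Ω} {Z : ℕ → Ω → ℝ}

theorem integral_card_filter_eq_sum_measureReal [IsFiniteMeasure μ] {ι : Type*} (s : Finset ι)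
    {P : ι → Ω → Prop} [∀ i, DecidablePred (P i)] (hP : ∀ i ∈ s, MeasurableSet {ω | P i ω}) :
    ∫ ω, (#{i ∈ s | P i ω} : ℝ) ∂μ = ∑ i ∈ s, μ.real {ω | P i ω} := by
  have hcard : ∀ ω, (#{i ∈ s | P i ω} : ℝ) = ∑ i ∈ s, {ω | P i ω}.indicator 1 ω := fun ω => by
    simp only [card_filter, Nat.cast_sum, Nat.cast_ite, Nat.cast_one, Nat.cast_zero,
      Set.indicator_apply, Set.mem_ofPred_eq, Pi.one_apply]
  simp_rw [hcard]
  rw [integral_finsetSum _ fun i hi => (integrable_const 1).indicator (hP i hi)]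
  exact sum_congr rfl fun i hi => integral_indicator_one (hP i hi)

theorem HasStationaryIncrements.measure_preimage (hstat : HasStationaryIncrements μ Z)
    (hmeas : ∀ n, Measurable (Z n)) (k : ℕ) {S : Set (ℕ → ℝ)} (hS : MeasurableSet S) :
    μ ((fun ω n => Z (n + k) ω - Z k ω) ⁻¹' S) = μ ((fun ω n => Z n ω) ⁻¹' S) := by
  have hinc : Measurable fun ω n => Z (n + k) ω - Z k ω :=
    measurable_pi_lambda _ fun n => (hmeas (n + k)).sub (hmeas k)
  rw [← Measure.map_apply hinc hS, hstat k, Measure.map_apply (measurable_pi_lambda _ hmeas) hS]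

theorem HasStationaryIncrements.measure_forall_ne_eq (hstat : HasStationaryIncrements μ Z)
    (hmeas : ∀ n, Measurable (Z n)) {k n : ℕ} (hk : k ≤ n) :
    μ {ω | ∀ j ∈ Icc 0 n, k < j → Z j ω ≠ Z k ω} = μ {ω | ∀ j ∈ Icc 1 (n - k), Z j ω ≠ 0} := by
  have hS : MeasurableSet {f : ℕ → ℝ | ∀ j ∈ Icc 1 (n - k), f j ≠ 0} := by
    measurability
  convert hstat.measure_preimage hmeas k hS using 2
  · ext ω
    simp only [Set.mem_preimage, Set.mem_ofPred_eq, mem_Icc]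
    constructor
    · intro h i hi
      exact sub_ne_zero_of_ne (h (i + k) ⟨by omega, by omega⟩ (by omega))
    · intro h j hj hkj
      simpa [Nat.sub_add_cancel hkj.le, sub_eq_zero] using h (j - k) ⟨by omega, by omega⟩
  · rfl

theorem HasStationaryIncrements.integral_card_range_eq_sum [IsFiniteMeasure μ]
    (hstat : HasStationaryIncrements μ Z) (hmeas : ∀ n, Measurable (Z n)) (n : ℕ) :
    ∫ ω, (#((Icc 0 n).image fun k => Z k ω) : ℝ) ∂μ
      = ∑ k ∈ range (n + 1), μ.real {ω | ∀ j ∈ Icc 1 k, Z j ω ≠ 0} := by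
  simp_rw [card_image_eq_card_filter_forall_lt_ne]
  rw [integral_card_filter_eq_sum_measureReal _ fun k _ => by measurability,
    ← sum_range_reflect, Nat.range_succ_eq_Icc_zero]
  refine sum_congr rfl fun k hk => ?_
  rw [measureReal_def, measureReal_def, hstat.measure_forall_ne_eq hmeas (mem_Icc.mp hk).2,
    Nat.add_sub_cancel]

theorem antitone_measureReal_forall_ne_zero [IsFiniteMeasure μ] :
    Antitone fun n => μ.real {ω | ∀ j ∈ Icc 1 n, Z j ω ≠ 0} :=
  fun _ _ hmn => measureReal_mono fun _ h j hj => h j (Icc_subset_Icc le_rfl hmn hj)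

end StationaryIncrements

section PartialSums

variable {p a : ℕ → ℝ}

theorem sum_range_succ_sub_sum_range_succ {M : Type*} [AddCommGroup M] (f : ℕ → M) {m n : ℕ}
    (h : m ≤ n) : ∑ k ∈ range (n + 1), f k - ∑ k ∈ range (m + 1), f k = ∑ k ∈ Ioc m n, f k := by
  rw [← sum_Ico_eq_sub f (by omega), Finset.Ico_add_one_add_one_eq_Ioc]

theorem Antitone.natCast_sub_mul_le_sum_Ioc (hp : Antitone p) (m n : ℕ) :
    ((n - m : ℕ) : ℝ) * p n ≤ ∑ k ∈ Ioc m n, p k := by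
  simpa [Nat.card_Ioc] using
    card_nsmul_le_sum (Ioc m n) p (p n) fun k hk => hp (mem_Ioc.mp hk).2

theorem Antitone.sum_Ioc_le_natCast_sub_mul (hp : Antitone p) (m n : ℕ) :
    ∑ k ∈ Ioc m n, p k ≤ ((n - m : ℕ) : ℝ) * p m := by
  simpa [Nat.card_Ioc] using
    sum_le_card_nsmul (Ioc m n) p (p m) fun k hk => hp (mem_Ioc.mp hk).1.le

theorem Antitone.natCast_mul_le_sum_range_succ (hp : Antitone p) (hp0 : 0 ≤ p 0) (n : ℕ) :
    (n : ℝ) * p n ≤ ∑ k ∈ range (n + 1), p k := by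
  have h := sum_range_succ_sub_sum_range_succ p (Nat.zero_le n)
  have := hp.natCast_sub_mul_le_sum_Ioc 0 n
  simp only [zero_add, sum_range_one, Nat.sub_zero] at h this
  linarith

theorem isBoundedUnder_natCast_div_mul_of_sum_range (hp : Antitone p) (hp0 : 0 ≤ p 0)
    (ha : ∀ n, 0 < a n)
    (hS : IsBoundedUnder (· ≤ ·) atTop fun n => (∑ k ∈ range (n + 1), p k) / a n) :
    IsBoundedUnder (· ≤ ·) atTop fun n : ℕ => (n : ℝ) / a n * p n :=
  hS.mono_le <| Eventually.of_forall fun n => show (n : ℝ) / a n * p n ≤ _ by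
    rw [div_mul_eq_mul_div]
    exact div_le_div_of_nonneg_right (hp.natCast_mul_le_sum_range_succ hp0 n) (ha n).le

theorem exists_pos_eventually_le_natCast_div_mul_of_sum_range (hp : Antitone p) (hp0 : 0 ≤ p)
    (ha : ∀ n, 0 < a n) {γ : ℝ} (hγ : 0 < γ) (hreg : RegularlyVarying a γ)
    (hlow : 0 < atTop.liminf fun n => (∑ k ∈ range (n + 1), p k) / a n)
    (hup : IsBoundedUnder (· ≤ ·) atTop fun n => (∑ k ∈ range (n + 1), p k) / a n) :
    ∃ δ > 0, ∀ᶠ n : ℕ in atTop, δ ≤ (n : ℝ) / a n * p n := by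
  set S : ℕ → ℝ := fun n => ∑ k ∈ range (n + 1), p k
  have hS0 : ∀ n, 0 ≤ S n / a n := fun n =>
    div_nonneg (sum_nonneg fun k _ => hp0 k) (ha n).le
  obtain ⟨c, hc, hcS⟩ : ∃ c > 0, ∀ᶠ n in atTop, c ≤ S n / a n :=
    ⟨_, half_pos hlow, (eventually_lt_of_lt_liminf (half_lt_self hlow)
      ⟨0, eventually_map.mpr (Eventually.of_forall hS0)⟩).mono fun _ h => h.le⟩
  obtain ⟨C, hC⟩ := hup
  replace hC : ∀ᶠ n in atTop, S n / a n ≤ C := hC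
  obtain ⟨M, hM2, hMγ⟩ := ((eventually_ge_atTop 2).and
    (((tendsto_rpow_atTop hγ).comp tendsto_natCast_atTop_atTop).eventually_gt_atTop
      ((C + 1) / c))).exists
  have hM1 : (0 : ℝ) < M - 1 := by
    have : (2 : ℝ) ≤ M := by exact_mod_cast hM2
    linarith
  have hratio : ∀ᶠ n : ℕ in atTop, (C + 1) / c < a (M * n) / a n := by
    have := (hreg M (by positivity)).eventually (eventually_gt_nhds hMγ)
    simpa only [← Nat.cast_mul, Nat.floor_natCast] using this
  have hcSM : ∀ᶠ n : ℕ in atTop, c ≤ S (M * n) / a (M * n) :=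
    (tendsto_atTop_mono (fun n => Nat.le_mul_of_pos_left n (by omega)) tendsto_id).eventually hcS
  refine ⟨1 / (M - 1), by positivity, ?_⟩
  filter_upwards [hcSM, hratio, hC] with n hcM hr hCn
  have hn : n ≤ M * n := Nat.le_mul_of_pos_left n (by omega)
  have hSM : C + 1 < S (M * n) / a n :=
    calc C + 1 = c * ((C + 1) / c) := by field_simp
      _ < c * (a (M * n) / a n) := by gcongr
      _ ≤ S (M * n) / a (M * n) * (a (M * n) / a n) := by gcongr; exact (div_pos (ha _) (ha n)).le
      _ = S (M * n) / a n := by field_simp [(ha (M * n)).ne']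
  have hdiff : S (M * n) - S n ≤ (M - 1) * (n * p n) := by
    have := hp.sum_Ioc_le_natCast_sub_mul n (M * n)
    rw [← sum_range_succ_sub_sum_range_succ p hn, Nat.cast_sub hn, Nat.cast_mul] at this
    linarith
  rw [div_le_iff₀' hM1]
  calc (1 : ℝ) = C + 1 - C := by ring
    _ ≤ S (M * n) / a n - S n / a n := by linarith
    _ = (S (M * n) - S n) / a n := by rw [sub_div]
    _ ≤ (M - 1) * (n * p n) / a n := by gcongr; exact (ha n).le
    _ = (M - 1) * (n / a n * p n) := by ring

end PartialSums

theorem stmt4_general {Ω : Type*} [MeasurableSpace Ω] (μ : Measure Ω) [IsProbabilityMeasure μ]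
    (Z : ℕ → Ω → ℝ) (hmeas : ∀ n, Measurable (Z n))
    (hstat : HasStationaryIncrements μ Z)
    (a : ℕ → ℝ) (hapos : ∀ n, 0 < a n)
    (γ : ℝ) (hγ : γ ∈ Set.Ioo (0:ℝ) 1) (hreg : RegularlyVarying a γ)
    (hlow : 0 < atTop.liminf
      (fun n : ℕ => (∫ ω, (((Finset.Icc 0 n).image (fun k => Z k ω)).card : ℝ) ∂μ) / a n))
    (hup : IsBoundedUnder (· ≤ ·) atTop
      (fun n : ℕ => (∫ ω, (((Finset.Icc 0 n).image (fun k => Z k ω)).card : ℝ) ∂μ) / a n)) :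
    0 < atTop.liminf (fun n : ℕ =>
        (n : ℝ) / a n * (μ {ω | ∀ j ∈ Finset.Icc 1 n, Z j ω ≠ 0}).toReal)
    ∧ IsBoundedUnder (· ≤ ·) atTop (fun n : ℕ =>
        (n : ℝ) / a n * (μ {ω | ∀ j ∈ Finset.Icc 1 n, Z j ω ≠ 0}).toReal) := by
  set p : ℕ → ℝ := fun n => μ.real {ω | ∀ j ∈ Icc 1 n, Z j ω ≠ 0}
  have hp : Antitone p := antitone_measureReal_forall_ne_zero
  have hp0 : 0 ≤ p := fun _ => measureReal_nonneg
  simp only [hstat.integral_card_range_eq_sum hmeas] at hlow hup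
  have hbdd := isBoundedUnder_natCast_div_mul_of_sum_range hp (hp0 0) hapos hup
  obtain ⟨δ, hδ, hev⟩ :=
    exists_pos_eventually_le_natCast_div_mul_of_sum_range hp hp0 hapos hγ.1 hreg hlow hup
  exact ⟨hδ.trans_le (le_liminf_of_le hbdd.isCoboundedUnder_ge hev), hbdd⟩

/-- If `0 < liminf E[R_n]/a_n ≤ limsup E[R_n]/a_n < ∞`, then
`0 < liminf (n/a_n) P(T_0 > n) ≤ limsup (n/a_n) P(T_0 > n) < ∞`.
"`limsup < ∞`" is expressed as eventual boundedness from above. -/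
theorem stmt4 {Ω : Type*} [MeasurableSpace Ω] (μ : Measure Ω) [IsProbabilityMeasure μ]
    (Z : ℕ → Ω → ℝ) (hmeas : ∀ n, Measurable (Z n)) (hZ0 : ∀ ω, Z 0 ω = 0)
    (hZint : ∀ n ω, ∃ m : ℤ, Z n ω = m)
    (hstat : HasStationaryIncrements μ Z)
    (a : ℕ → ℝ) (hapos : ∀ n, 0 < a n)
    (γ : ℝ) (hγ : γ ∈ Set.Ioo (0:ℝ) 1) (hreg : RegularlyVarying a γ)
    (hlow : 0 < atTop.liminf
      (fun n : ℕ => (∫ ω, (((Finset.Icc 0 n).image (fun k => Z k ω)).card : ℝ) ∂μ) / a n))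
    (hup : IsBoundedUnder (· ≤ ·) atTop
      (fun n : ℕ => (∫ ω, (((Finset.Icc 0 n).image (fun k => Z k ω)).card : ℝ) ∂μ) / a n)) :
    0 < atTop.liminf (fun n : ℕ =>
        (n : ℝ) / a n * (μ {ω | ∀ j ∈ Finset.Icc 1 n, Z j ω ≠ 0}).toReal)
    ∧ IsBoundedUnder (· ≤ ·) atTop (fun n : ℕ =>
        (n : ℝ) / a n * (μ {ω | ∀ j ∈ Finset.Icc 1 n, Z j ω ≠ 0}).toReal) :=
  stmt4_general μ Z hmeas hstat a hapos γ hγ hreg hlow hup
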